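/- arXiv:1705.04422 — 5 statements merged into one kernel-verified Lean document; each statement's English description precedes it below -/
import Mathlib

section
/- Let κ be a regular uncountable cardinal, let γ ≤ κ be an ordinal, and let ⟨μ_α : α < γ⟩ be a sequence of pairwise distinct normal measures on κ. Then there is a sequence ⟨X_α : α < γ⟩ of pairwise disjoint subsets of κ such that for all α, β < γ one has X_α ∈ μ_β if and only if α = β. -/
/-!
Any two distinct normal measures `μ_α ≠ μ_β` are separated by disjoint sets `A_{αβ} ∈ μ_α`
and `A_{βα} ∈ μ_β`. Let `X_α` be the diagonal intersection of the sets `A_{αβ}` (over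
`β < γ`, `β ≠ α`), restricted to ordinals above `α`; normality puts `X_α` in `μ_α`. If
`ξ ∈ X_α ∩ X_β`, then `α, β < ξ`, so `ξ ∈ A_{αβ} ∩ A_{βα} = ∅`. Hence the `X_α` are pairwise
disjoint, and `X_α ∉ μ_β` for `β ≠ α` because `X_β ∈ μ_β`.
-/

/-- A *normal measure* on (the set of ordinals below) `κ`: an ultrafilter on `κ`
that is proper, uniform (contains all final segments of `κ`) and normal
(closed under diagonal intersections). -/
structure NormalMeasure (κ : Ordinal) where
  sets : Set (Set Ordinal)
  sets_subset : ∀ X ∈ sets, X ⊆ Set.Iio κ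
  univ_mem : Set.Iio κ ∈ sets
  empty_not_mem : ∅ ∉ sets
  superset_mem : ∀ X ∈ sets, ∀ Y, X ⊆ Y → Y ⊆ Set.Iio κ → Y ∈ sets
  inter_mem : ∀ X ∈ sets, ∀ Y ∈ sets, X ∩ Y ∈ sets
  ultra : ∀ X, X ⊆ Set.Iio κ → X ∈ sets ∨ Set.Iio κ \ X ∈ sets
  uniform : ∀ α < κ, {ξ : Ordinal | α ≤ ξ ∧ ξ < κ} ∈ sets
  normal : ∀ f : Ordinal → Set Ordinal, (∀ α < κ, f α ∈ sets) →
      {ξ : Ordinal | ξ < κ ∧ ∀ α < ξ, ξ ∈ f α} ∈ sets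

open Set Order

namespace NormalMeasure

variable {κ : Ordinal}

lemma ext_of_sets_eq {m n : NormalMeasure κ} (h : m.sets = n.sets) : m = n := by
  cases m; cases n; cases h; rfl

variable (m : NormalMeasure κ)

lemma notMem_of_disjoint {X Y : Set Ordinal} (hX : X ∈ m.sets) (hXY : Disjoint X Y) :
    Y ∉ m.sets := fun hY =>
  m.empty_not_mem (hXY.inter_eq ▸ m.inter_mem X hX Y hY)

lemma diff_mem_of_notMem {X : Set Ordinal} (hX : X ⊆ Iio κ) (h : X ∉ m.sets) :
    Iio κ \ X ∈ m.sets :=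
  (m.ultra X hX).resolve_left h

lemma Ioo_mem (hκ : IsSuccLimit κ) {α : Ordinal} (hα : α < κ) : Ioo α κ ∈ m.sets := by
  have h := m.uniform (succ α) (hκ.succ_lt hα)
  simp only [succ_le_iff] at h
  exact h

lemma diag_mem (p : Ordinal → Prop) (f : Ordinal → Set Ordinal)
    (hf : ∀ β < κ, p β → f β ∈ m.sets) :
    {ξ | ξ < κ ∧ ∀ β < ξ, p β → ξ ∈ f β} ∈ m.sets := by
  refine m.superset_mem _ (m.normal (fun β => {ξ | ξ < κ ∧ (p β → ξ ∈ f β)}) fun β hβ => ?_)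
    _ (fun ξ ⟨hξ, h⟩ => ⟨hξ, fun β hβ => (h β hβ).2⟩) (fun ξ hξ => hξ.1)
  by_cases hp : p β
  · exact m.superset_mem _ (hf β hβ hp) _
      (fun ξ hξ => ⟨m.sets_subset _ (hf β hβ hp) hξ, fun _ => hξ⟩) (fun ξ hξ => hξ.1)
  · exact m.superset_mem _ m.univ_mem _ (fun ξ hξ => ⟨hξ, fun h => absurd h hp⟩)
      (fun ξ hξ => hξ.1)

lemma exists_disjoint_mem_mem {m n : NormalMeasure κ} (h : m ≠ n) :
    ∃ A ∈ m.sets, ∃ B ∈ n.sets, Disjoint A B := by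
  obtain ⟨Z, hZ⟩ : ∃ Z, ¬(Z ∈ m.sets ↔ Z ∈ n.sets) := by
    by_contra! h'
    exact h (ext_of_sets_eq (Set.ext h'))
  by_cases hm : Z ∈ m.sets
  · have hn : Z ∉ n.sets := fun hn => hZ (iff_of_true hm hn)
    exact ⟨Z, hm, _, n.diff_mem_of_notMem (m.sets_subset Z hm) hn, disjoint_sdiff_right⟩
  · have hn : Z ∈ n.sets := by tauto
    exact ⟨_, m.diff_mem_of_notMem (n.sets_subset Z hn) hm, Z, hn, disjoint_sdiff_left⟩

end NormalMeasure

/-- `A α β` is meant to be a set of `μ_α` separating it from `μ_β`. -/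
def diagSeparator (κ γ : Ordinal) (A : Ordinal → Ordinal → Set Ordinal) (α : Ordinal) :
    Set Ordinal :=
  Ioo α κ ∩ {ξ | ξ < κ ∧ ∀ β < ξ, β < γ ∧ β ≠ α → ξ ∈ A α β}

section diagSeparator

variable {κ γ : Ordinal} {A : Ordinal → Ordinal → Set Ordinal}

lemma diagSeparator_subset (α : Ordinal) : diagSeparator κ γ A α ⊆ Iio κ :=
  fun _ hξ => hξ.1.2

lemma NormalMeasure.diagSeparator_mem (m : NormalMeasure κ) (hκ : IsSuccLimit κ)
    {α : Ordinal} (hα : α < κ) (hA : ∀ β < γ, β ≠ α → A α β ∈ m.sets) :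
    diagSeparator κ γ A α ∈ m.sets :=
  m.inter_mem _ (m.Ioo_mem hκ hα) _ (m.diag_mem _ _ fun β _ hβ => hA β hβ.1 hβ.2)

lemma disjoint_diagSeparator {α β : Ordinal} (hA : Disjoint (A α β) (A β α))
    (hα : α < γ) (hβ : β < γ) (hne : α ≠ β) :
    Disjoint (diagSeparator κ γ A α) (diagSeparator κ γ A β) := by
  rw [Set.disjoint_left]
  rintro ξ ⟨⟨hαξ, -⟩, -, hξα⟩ ⟨⟨hβξ, -⟩, -, hξβ⟩
  exact Set.disjoint_left.mp hA (hξα β hβξ ⟨hβ, hne.symm⟩) (hξβ α hαξ ⟨hα, hne⟩)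

end diagSeparator

theorem stmt0_general (c : Cardinal) (hunc : Cardinal.aleph0 < c)
    (γ : Ordinal) (hγ : γ ≤ c.ord)
    (μ : Ordinal → NormalMeasure c.ord)
    (hdist : ∀ α < γ, ∀ β < γ, α ≠ β → μ α ≠ μ β) :
    ∃ X : Ordinal → Set Ordinal,
      (∀ α < γ, X α ⊆ Set.Iio c.ord) ∧
      (∀ α < γ, ∀ β < γ, α ≠ β → X α ∩ X β = ∅) ∧
      (∀ α < γ, ∀ β < γ, (X α ∈ (μ β).sets ↔ α = β)) := by
  choose! P hP Q hQ hPQ using fun α (hα : α < γ) β (hβ : β < γ) (hne : α ≠ β) =>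
    NormalMeasure.exists_disjoint_mem_mem (hdist α hα β hβ hne)
  set A : Ordinal → Ordinal → Set Ordinal := fun α β => P α β ∩ Q β α
  have hA : ∀ α < γ, ∀ β < γ, β ≠ α → A α β ∈ (μ α).sets := fun α hα β hβ hne =>
    (μ α).inter_mem _ (hP α hα β hβ hne.symm) _ (hQ β hβ α hα hne)
  have hmem : ∀ α < γ, diagSeparator c.ord γ A α ∈ (μ α).sets := fun α hα =>
    (μ α).diagSeparator_mem (Cardinal.isSuccLimit_ord hunc.le) (hα.trans_le hγ) (hA α hα)
  have hdisj : ∀ α < γ, ∀ β < γ, α ≠ β →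
      Disjoint (diagSeparator c.ord γ A α) (diagSeparator c.ord γ A β) :=
    fun α hα β hβ hne => disjoint_diagSeparator
      ((hPQ α hα β hβ hne).mono inter_subset_left inter_subset_right) hα hβ hne
  refine ⟨diagSeparator c.ord γ A, fun α _ => diagSeparator_subset α,
    fun α hα β hβ hne => (hdisj α hα β hβ hne).inter_eq, fun α hα β hβ => ⟨fun h => ?_, ?_⟩⟩
  · by_contra hne
    exact (μ β).notMem_of_disjoint (hmem β hβ) (hdisj β hβ α hα (Ne.symm hne)) h
  · rintro rfl
    exact hmem α hα

/-- If `κ` is a regular uncountable cardinal, `γ ≤ κ` an ordinal and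
`⟨μ_α : α < γ⟩` a sequence of pairwise distinct normal measures on `κ`, then there
is a sequence `⟨X_α : α < γ⟩` of pairwise disjoint subsets of `κ` such that
`X_α ∈ μ_β` if and only if `α = β`. -/
theorem stmt0 (c : Cardinal) (hreg : c.IsRegular) (hunc : Cardinal.aleph0 < c)
    (γ : Ordinal) (hγ : γ ≤ c.ord)
    (μ : Ordinal → NormalMeasure c.ord)
    (hdist : ∀ α < γ, ∀ β < γ, α ≠ β → μ α ≠ μ β) :
    ∃ X : Ordinal → Set Ordinal,
      (∀ α < γ, X α ⊆ Set.Iio c.ord) ∧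
      (∀ α < γ, ∀ β < γ, α ≠ β → X α ∩ X β = ∅) ∧
      (∀ α < γ, ∀ β < γ, (X α ∈ (μ β).sets ↔ α = β)) :=
  stmt0_general c hunc γ hγ μ hdist
end

section
/- Let κ be a regular uncountable cardinal and let 𝒜 be a family of subsets of κ. Then 𝒜 is contained in a proper normal uniform filter on κ if and only if 𝒜 satisfies the diagonal intersection property: for every function f : κ → 𝒜, the diagonal intersection ∆_{α<κ} f(α) = {ξ < κ : ∀ α < ξ, ξ ∈ f(α)} is stationary in κ. -/
/-- A proper, normal, uniform filter on (the set of ordinals below) `κ`. -/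
structure NormalUniformFilter (κ : Ordinal) where
  sets : Set (Set Ordinal)
  sets_subset : ∀ X ∈ sets, X ⊆ Set.Iio κ
  univ_mem : Set.Iio κ ∈ sets
  empty_not_mem : ∅ ∉ sets
  superset_mem : ∀ X ∈ sets, ∀ Y, X ⊆ Y → Y ⊆ Set.Iio κ → Y ∈ sets
  inter_mem : ∀ X ∈ sets, ∀ Y ∈ sets, X ∩ Y ∈ sets
  uniform : ∀ α < κ, {ξ : Ordinal | α ≤ ξ ∧ ξ < κ} ∈ sets
  normal : ∀ f : Ordinal → Set Ordinal, (∀ α < κ, f α ∈ sets) →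
      {ξ : Ordinal | ξ < κ ∧ ∀ α < ξ, ξ ∈ f α} ∈ sets

/-- `C` is club in `κ`: a subset of `κ` that is unbounded in `κ` and closed under
suprema of its bounded nonempty subsets. -/
def IsClubIn (κ : Ordinal) (C : Set Ordinal) : Prop :=
  C ⊆ Set.Iio κ ∧ (∀ α < κ, ∃ β ∈ C, α ≤ β) ∧
    ∀ s ⊆ C, s.Nonempty → sSup s < κ → sSup s ∈ C

/-- `S` is stationary in `κ`: it meets every club subset of `κ`. -/
def IsStationaryIn (κ : Ordinal) (S : Set Ordinal) : Prop :=
  ∀ C, IsClubIn κ C → (S ∩ C).Nonempty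


/-!
A normal uniform filter contains every club `C`: a nonzero point of the diagonal intersection of
the tails `[next α, κ)`, with `next α ∈ C` above `α`, is a limit of points of `C`. Hence every
diagonal intersection of sets of the filter is stationary.

Conversely, let `𝒜' = 𝒜 ∪ {κ}` and take the sets containing `Δ f ∩ C` for some `f : κ → 𝒜'` and
some club `C`; the diagonal intersection property makes this filter proper. It is normal because a
pairing bijection `π : κ × κ → κ` merges `κ` many functions `f α` into `g (π (α, β)) = f α β`:
above the club of closure points of `π`, `Δ g ∩ Δ_α C α` lies in every `Δ (f α) ∩ C α`. That
diagonal intersections of clubs are clubs is where regularity and uncountability of `κ` are used.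
-/

open Set Cardinal Ordinal Order

universe u

def diagInter (κ : Ordinal.{u}) (f : Ordinal.{u} → Set Ordinal.{u}) : Set Ordinal.{u} :=
  {ξ | ξ < κ ∧ ∀ α < ξ, ξ ∈ f α}

section Club

variable {κ α ξ : Ordinal.{u}} {C : Set Ordinal.{u}}

theorem diagInter_subset_Iio (f : Ordinal.{u} → Set Ordinal.{u}) : diagInter κ f ⊆ Iio κ :=
  fun _ hξ => hξ.1

theorem diagInter_mono {f g : Ordinal.{u} → Set Ordinal.{u}} (h : ∀ α < κ, f α ⊆ g α) :
    diagInter κ f ⊆ diagInter κ g :=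
  fun _ ⟨hξ, hf⟩ => ⟨hξ, fun α hα => h α (hα.trans hξ) (hf α hα)⟩

theorem isClubIn_Iio : IsClubIn κ (Iio κ) :=
  ⟨subset_rfl, fun α hα => ⟨α, hα, le_rfl⟩, fun _ _ _ h => h⟩

theorem isClubIn_Ico (hα : α < κ) : IsClubIn κ (Ico α κ) := by
  refine ⟨Ico_subset_Iio_self, fun β hβ => ⟨max α β, ⟨le_max_left _ _, max_lt hα hβ⟩,
    le_max_right _ _⟩, fun s hs ⟨η, hη⟩ hsup => ⟨?_, hsup⟩⟩
  exact le_csSup_of_le (bddAbove_Iio.mono (hs.trans Ico_subset_Iio_self)) hη (hs hη).1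

theorem IsClubIn.exists_gt (hC : IsClubIn κ C) (hκ : IsSuccLimit κ) (hα : α < κ) :
    ∃ β ∈ C, α < β := by
  obtain ⟨β, hβC, hβ⟩ := hC.2.1 (succ α) (hκ.succ_lt hα)
  exact ⟨β, hβC, (lt_succ α).trans_le hβ⟩

theorem IsClubIn.mem_of_forall_exists_gt (hC : IsClubIn κ C) (hξ : ξ < κ) (h0 : 0 < ξ)
    (h : ∀ δ < ξ, ∃ η ∈ C, δ < η ∧ η ≤ ξ) : ξ ∈ C := by
  have hne : (C ∩ Iic ξ).Nonempty := by
    obtain ⟨η, hηC, -, hη⟩ := h 0 h0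
    exact ⟨η, hηC, hη⟩
  have hsup : sSup (C ∩ Iic ξ) = ξ :=
    csSup_eq_of_forall_le_of_forall_lt_exists_gt hne (fun _ hη => hη.2) fun δ hδ => by
      obtain ⟨η, hηC, hδη, hη⟩ := h δ hδ
      exact ⟨η, ⟨hηC, hη⟩, hδη⟩
  exact hsup ▸ hC.2.2 _ inter_subset_left hne (by rwa [hsup])

end Club

namespace NormalUniformFilter

variable {κ : Ordinal.{u}} (F : NormalUniformFilter κ)

theorem mem_sets_of_isClubIn (hκ : IsSuccLimit κ) {C : Set Ordinal.{u}} (hC : IsClubIn κ C) :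
    C ∈ F.sets := by
  choose! next hnextC hnext using fun α (hα : α < κ) => hC.exists_gt hκ hα
  have hD : diagInter κ (fun α => Ico (next α) κ) ∩ Ico 1 κ ∈ F.sets :=
    F.inter_mem _ (F.normal _ fun α hα => F.uniform _ (hC.1 (hnextC α hα))) _
      (F.uniform 1 (one_lt_of_isSuccLimit hκ))
  refine F.superset_mem _ hD C (fun ξ ⟨⟨hξ, hξnext⟩, h1ξ, _⟩ => ?_) hC.1
  refine hC.mem_of_forall_exists_gt hξ (zero_lt_one.trans_le h1ξ) fun δ hδ => ?_
  exact ⟨next δ, hnextC δ (hδ.trans hξ), hnext δ (hδ.trans hξ), (hξnext δ hδ).1⟩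

theorem isStationaryIn_of_mem (hκ : IsSuccLimit κ) {X : Set Ordinal.{u}} (hX : X ∈ F.sets) :
    IsStationaryIn κ X := fun _ hC =>
  nonempty_iff_ne_empty.2 fun h =>
    F.empty_not_mem (h ▸ F.inter_mem _ hX _ (F.mem_sets_of_isClubIn hκ hC))

end NormalUniformFilter

section Regular

variable {c : Cardinal.{u}} {C D : Set Ordinal.{u}}

theorem iSup_Iio_lt_ord (hreg : c.IsRegular) {β : Ordinal.{u}} (hβ : β < c.ord)
    {f : Iio β → Ordinal.{u}} (hf : ∀ i, f i < c.ord) : ⨆ i, f i < c.ord := by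
  apply lift_iSup_lt_of_lt_cof _ hf
  rw [Cardinal.mk_Iio_ordinal, ← lift_cof, hreg.cof_ord]
  simpa [← Ordinal.lift_card] using lt_ord.mp hβ

theorem isClubIn_diagInter (hreg : c.IsRegular) (hunc : ℵ₀ < c) {C : Ordinal.{u} → Set Ordinal.{u}}
    (hC : ∀ α < c.ord, IsClubIn c.ord (C α)) : IsClubIn c.ord (diagInter c.ord C) := by
  refine ⟨diagInter_subset_Iio C, fun α hα => ?_, fun s hs hne hsup => ⟨hsup, fun γ hγ => ?_⟩⟩
  · choose! E hEC hE using fun γ (hγ : γ < c.ord) β (hβ : β < c.ord) => (hC γ hγ).2.1 β hβ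
    let step β := max (succ β) (⨆ γ : Iio β, E γ β)
    have hstep : ∀ β < c.ord, step β < c.ord := fun β hβ =>
      max_lt ((isSuccLimit_ord hreg.aleph0_le).succ_lt hβ)
        (iSup_Iio_lt_ord hreg hβ fun γ => (hC γ (γ.2.trans hβ)).1 (hEC γ (γ.2.trans hβ) β hβ))
    have hE_le_step : ∀ β, ∀ γ < β, E γ β ≤ step β := fun β γ hγ =>
      (Ordinal.le_iSup _ (⟨γ, hγ⟩ : Iio β)).trans (le_max_right _ _)
    -- each `C γ` meets `[step^[n] α, step^[n+1] α]` once `γ < step^[n] α`, so it is cofinal in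
    -- the closure point `nfp step α`
    have hξ : nfp step α < c.ord := nfp_lt_ord (by rwa [hreg.cof_ord]) hstep hα
    refine ⟨nfp step α, ⟨hξ, fun γ hγ => ?_⟩, le_nfp step α⟩
    refine (hC γ (hγ.trans hξ)).mem_of_forall_exists_gt hξ (zero_le.trans_lt hγ) fun δ hδ => ?_
    obtain ⟨n, hn⟩ := lt_nfp_iff.1 (max_lt hγ hδ)
    have hn_lt : step^[n] α < c.ord := (iterate_le_nfp step α n).trans_lt hξ
    refine ⟨E γ (step^[n] α), hEC γ (hγ.trans hξ) _ hn_lt,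
      ((le_max_right γ δ).trans_lt hn).trans_le (hE γ (hγ.trans hξ) _ hn_lt), ?_⟩
    calc E γ (step^[n] α) ≤ step (step^[n] α) := hE_le_step _ γ ((le_max_left γ δ).trans_lt hn)
      _ = step^[n + 1] α := (Function.iterate_succ_apply' step n α).symm
      _ ≤ nfp step α := iterate_le_nfp step α (n + 1)
  · have hbdd := bddAbove_Iio.mono (hs.trans (diagInter_subset_Iio C))
    refine (hC γ (hγ.trans hsup)).mem_of_forall_exists_gt hsup (zero_le.trans_lt hγ)
      fun δ hδ => ?_
    obtain ⟨η, hηs, hη⟩ := exists_lt_of_lt_csSup hne (max_lt hγ hδ)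
    exact ⟨η, (hs hηs).2 γ ((le_max_left γ δ).trans_lt hη), (le_max_right γ δ).trans_lt hη,
      le_csSup hbdd hηs⟩

theorem IsClubIn.inter (hreg : c.IsRegular) (hunc : ℵ₀ < c) (hC : IsClubIn c.ord C)
    (hD : IsClubIn c.ord D) : IsClubIn c.ord (C ∩ D) := by
  refine ⟨inter_subset_left.trans hC.1, fun α hα => ?_, fun s hs hne hsup =>
    ⟨hC.2.2 s (hs.trans inter_subset_left) hne hsup,
      hD.2.2 s (hs.trans inter_subset_right) hne hsup⟩⟩
  have hΔ := isClubIn_diagInter hreg hunc (C := fun γ => if γ = 0 then C else D) fun γ _ => by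
    split_ifs <;> assumption
  have h2 : ((2 : ℕ) : Ordinal) < c.ord :=
    natCast_lt_of_isSuccLimit (isSuccLimit_ord hreg.aleph0_le) 2
  obtain ⟨β, ⟨-, hβ⟩, hαβ⟩ := hΔ.2.1 (max α 2) (max_lt hα h2)
  have h1β : 1 < β := one_lt_two.trans_le ((le_max_right _ _).trans hαβ)
  exact ⟨β, ⟨by simpa using hβ 0 (zero_lt_one.trans h1β), by simpa using hβ 1 h1β⟩,
    (le_max_left _ _).trans hαβ⟩

theorem isClubIn_closedUnder (hreg : c.IsRegular) (hunc : ℵ₀ < c)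
    {F : Ordinal.{u} → Ordinal.{u} → Ordinal.{u}} (hF : ∀ α < c.ord, ∀ β < c.ord, F α β < c.ord) :
    IsClubIn c.ord {ξ | ξ < c.ord ∧ ∀ α < ξ, ∀ β < ξ, F α β < ξ} := by
  have hκ := isSuccLimit_ord hreg.aleph0_le
  convert isClubIn_diagInter hreg hunc fun α hα => isClubIn_diagInter hreg hunc fun β hβ =>
    isClubIn_Ico (hκ.succ_lt (hF α hα β hβ)) using 1
  ext ξ
  simp only [diagInter, mem_ofPred_eq, mem_Ico, succ_le_iff]
  constructor
  · rintro ⟨hξ, h⟩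
    exact ⟨hξ, fun α hα => ⟨hξ, fun β hβ => ⟨h α hα β hβ, hξ⟩⟩⟩
  · rintro ⟨hξ, h⟩
    exact ⟨hξ, fun α hα β hβ => ((h α hα).2 β hβ).1⟩

theorem exists_bijOn_prod_Iio_ord (hc : ℵ₀ ≤ c) :
    ∃ π : Ordinal.{u} × Ordinal.{u} → Ordinal.{u},
      BijOn π (Iio c.ord ×ˢ Iio c.ord) (Iio c.ord) := by
  have hcard : #↥(Iio c.ord ×ˢ Iio c.ord) = #↥(Iio c.ord) := by
    rw [Cardinal.mk_congr (Equiv.Set.prod _ _), mk_prod, Cardinal.mk_Iio_ordinal]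
    simpa using mul_eq_self (aleph0_le_lift.mpr hc)
  obtain ⟨e⟩ := Cardinal.eq.1 hcard
  classical
  let π p := if hp : p ∈ Iio c.ord ×ˢ Iio c.ord then (e ⟨p, hp⟩ : Ordinal) else 0
  have hπ : ∀ p (hp : p ∈ Iio c.ord ×ˢ Iio c.ord), π p = e ⟨p, hp⟩ := fun p hp => dif_pos hp
  refine ⟨π, fun p hp => hπ p hp ▸ (e _).2, fun p hp q hq hpq => ?_, fun γ hγ => ?_⟩
  · rw [hπ p hp, hπ q hq] at hpq
    exact congrArg Subtype.val (e.injective (Subtype.ext hpq))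
  · exact ⟨_, (e.symm ⟨γ, hγ⟩).2, by simp [hπ]⟩

end Regular

def DiagStationary (κ : Ordinal.{u}) (𝒜 : Set (Set Ordinal.{u})) : Prop :=
  ∀ f : Ordinal.{u} → Set Ordinal.{u}, (∀ α < κ, f α ∈ 𝒜) → IsStationaryIn κ (diagInter κ f)

section Stationary

variable {κ : Ordinal.{u}} {S T : Set Ordinal.{u}} {𝒜 : Set (Set Ordinal.{u})}

theorem IsStationaryIn.mono (hS : IsStationaryIn κ S) (h : S ⊆ T) : IsStationaryIn κ T :=
  fun C hC => (hS C hC).mono (inter_subset_inter_left C h)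

theorem isStationaryIn_Iio (hκ : 0 < κ) : IsStationaryIn κ (Iio κ) := fun _ hC =>
  let ⟨β, hβ, _⟩ := hC.2.1 0 hκ
  ⟨β, hC.1 hβ, hβ⟩

theorem DiagStationary.insert_Iio (h : DiagStationary κ 𝒜) (h𝒜 : ∀ X ∈ 𝒜, X ⊆ Iio κ)
    (hκ : 0 < κ) : DiagStationary κ (insert (Iio κ) 𝒜) := by
  intro f hf
  rcases 𝒜.eq_empty_or_nonempty with rfl | ⟨A, hA⟩
  · refine (isStationaryIn_Iio hκ).mono fun ξ hξ => ⟨hξ, fun α hα => ?_⟩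
    have hfα : f α = Iio κ := by simpa using hf α (hα.trans hξ)
    exact hfα ▸ hξ
  · classical
    let g α := if f α ∈ 𝒜 then f α else A
    refine (h g fun α _ => ?_).mono (diagInter_mono fun α hα => ?_)
    · by_cases hfα : f α ∈ 𝒜 <;> simp [g, hfα, hA]
    · by_cases hfα : f α ∈ 𝒜
      · simp [g, hfα]
      · rw [show g α = A from if_neg hfα, (mem_insert_iff.1 (hf α hα)).resolve_right hfα]
        exact h𝒜 A hA

end Stationary

def normalFilterSets (κ : Ordinal.{u}) (𝒜 : Set (Set Ordinal.{u})) : Set (Set Ordinal.{u}) :=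
  {X | X ⊆ Iio κ ∧ ∃ f : Ordinal.{u} → Set Ordinal.{u}, (∀ α < κ, f α ∈ 𝒜) ∧
    ∃ C, IsClubIn κ C ∧ diagInter κ f ∩ C ⊆ X}

section NormalFilterSets

variable {κ : Ordinal.{u}} {c : Cardinal.{u}} {𝒜 : Set (Set Ordinal.{u})} {C X Y : Set Ordinal.{u}}

theorem mem_normalFilterSets_of_superset (hX : X ∈ normalFilterSets κ 𝒜) (hXY : X ⊆ Y)
    (hY : Y ⊆ Iio κ) : Y ∈ normalFilterSets κ 𝒜 :=
  let ⟨_, f, hf, C, hC, hsub⟩ := hX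
  ⟨hY, f, hf, C, hC, hsub.trans hXY⟩

theorem isClubIn_mem_normalFilterSets (hIio : Iio κ ∈ 𝒜) (hC : IsClubIn κ C) :
    C ∈ normalFilterSets κ 𝒜 :=
  ⟨hC.1, fun _ => Iio κ, fun _ _ => hIio, C, hC, inter_subset_right⟩

theorem subset_normalFilterSets (h𝒜 : ∀ X ∈ 𝒜, X ⊆ Iio κ) (hκ : 1 < κ) :
    𝒜 ⊆ normalFilterSets κ 𝒜 := fun X hX =>
  ⟨h𝒜 X hX, fun _ => X, fun _ _ => hX, Ico 1 κ, isClubIn_Ico hκ,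
    fun _ ⟨⟨_, hξ⟩, h1ξ, _⟩ => hξ 0 (zero_lt_one.trans_le h1ξ)⟩

theorem inter_isClubIn_mem_normalFilterSets (hreg : c.IsRegular) (hunc : ℵ₀ < c)
    (hX : X ∈ normalFilterSets c.ord 𝒜) (hC : IsClubIn c.ord C) :
    X ∩ C ∈ normalFilterSets c.ord 𝒜 :=
  let ⟨hXκ, f, hf, D, hD, hsub⟩ := hX
  ⟨inter_subset_left.trans hXκ, f, hf, D ∩ C, hD.inter hreg hunc hC,
    fun _ ⟨hξf, hξD, hξC⟩ => ⟨hsub ⟨hξf, hξD⟩, hξC⟩⟩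

theorem diagInter_mem_normalFilterSets (hreg : c.IsRegular) (hunc : ℵ₀ < c)
    {X : Ordinal.{u} → Set Ordinal.{u}} (hX : ∀ α < c.ord, X α ∈ normalFilterSets c.ord 𝒜) :
    diagInter c.ord X ∈ normalFilterSets c.ord 𝒜 := by
  obtain ⟨π, hπ⟩ := exists_bijOn_prod_Iio_ord hreg.aleph0_le
  choose! f hf C hC hsub using fun α hα => (hX α hα).2
  let unpair := Function.invFunOn π (Iio c.ord ×ˢ Iio c.ord)
  have hunpair : MapsTo unpair (Iio c.ord) (Iio c.ord ×ˢ Iio c.ord) := hπ.surjOn.mapsTo_invFunOn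
  refine ⟨diagInter_subset_Iio X, fun γ => f (unpair γ).1 (unpair γ).2,
    fun γ hγ => hf _ (hunpair hγ).1 _ (hunpair hγ).2,
    diagInter c.ord C ∩ {ξ | ξ < c.ord ∧ ∀ α < ξ, ∀ β < ξ, π (α, β) < ξ},
    (isClubIn_diagInter hreg hunc hC).inter hreg hunc
      (isClubIn_closedUnder hreg hunc fun α hα β hβ => hπ.mapsTo ⟨hα, hβ⟩), ?_⟩
  rintro ξ ⟨⟨hξ, hξg⟩, ⟨-, hξC⟩, -, hξπ⟩
  refine ⟨hξ, fun α hα => hsub α (hα.trans hξ) ⟨⟨hξ, fun β hβ => ?_⟩, hξC α hα⟩⟩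
  have hunpair_π : unpair (π (α, β)) = (α, β) :=
    hπ.invOn_invFunOn.1 ⟨hα.trans hξ, hβ.trans hξ⟩
  simpa only [hunpair_π] using hξg _ (hξπ α hα β hβ)

theorem inter_mem_normalFilterSets (hreg : c.IsRegular) (hunc : ℵ₀ < c)
    (hX : X ∈ normalFilterSets c.ord 𝒜) (hY : Y ∈ normalFilterSets c.ord 𝒜) :
    X ∩ Y ∈ normalFilterSets c.ord 𝒜 := by
  have hΔ := diagInter_mem_normalFilterSets hreg hunc (X := fun α => if α = 0 then X else Y)
    fun α _ => by split_ifs <;> assumption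
  have h2 : ((2 : ℕ) : Ordinal) < c.ord :=
    natCast_lt_of_isSuccLimit (isSuccLimit_ord hreg.aleph0_le) 2
  refine mem_normalFilterSets_of_superset
    (inter_isClubIn_mem_normalFilterSets hreg hunc hΔ (isClubIn_Ico h2)) ?_
    (inter_subset_left.trans hX.1)
  rintro ξ ⟨⟨-, hξ⟩, h2ξ, -⟩
  have h1ξ : 1 < ξ := one_lt_two.trans_le h2ξ
  exact ⟨by simpa using hξ 0 (zero_lt_one.trans h1ξ), by simpa using hξ 1 h1ξ⟩

end NormalFilterSets

def NormalUniformFilter.ofDiagStationary {c : Cardinal.{u}} (hreg : c.IsRegular) (hunc : ℵ₀ < c)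
    {𝒜 : Set (Set Ordinal.{u})} (hIio : Iio c.ord ∈ 𝒜) (h𝒜 : DiagStationary c.ord 𝒜) :
    NormalUniformFilter c.ord where
  sets := normalFilterSets c.ord 𝒜
  sets_subset _ hX := hX.1
  univ_mem := isClubIn_mem_normalFilterSets hIio isClubIn_Iio
  empty_not_mem := fun ⟨_, f, hf, C, hC, hsub⟩ =>
    let ⟨_, hξ⟩ := h𝒜 f hf C hC
    hsub hξ
  superset_mem _ hX _ hXY hY := mem_normalFilterSets_of_superset hX hXY hY
  inter_mem _ hX _ hY := inter_mem_normalFilterSets hreg hunc hX hY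
  uniform _ hα := isClubIn_mem_normalFilterSets hIio (isClubIn_Ico hα)
  normal _ hX := diagInter_mem_normalFilterSets hreg hunc hX

/-- A family `𝒜` of subsets of a regular uncountable cardinal `κ` is contained in a
proper normal uniform filter on `κ` if and only if `𝒜` has the diagonal intersection
property: for every `f : κ → 𝒜` the diagonal intersection
`∆_{α<κ} f α = {ξ < κ : ∀ α < ξ, ξ ∈ f α}` is stationary in `κ`. -/
theorem stmt4 (c : Cardinal) (hreg : c.IsRegular) (hunc : Cardinal.aleph0 < c)
    (𝒜 : Set (Set Ordinal)) (h𝒜 : ∀ X ∈ 𝒜, X ⊆ Set.Iio c.ord) :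
    (∃ F : NormalUniformFilter c.ord, 𝒜 ⊆ F.sets) ↔
      ∀ f : Ordinal → Set Ordinal, (∀ α < c.ord, f α ∈ 𝒜) →
        IsStationaryIn c.ord {ξ : Ordinal | ξ < c.ord ∧ ∀ α < ξ, ξ ∈ f α} := by
  have hκ : IsSuccLimit c.ord := isSuccLimit_ord hreg.aleph0_le
  constructor
  · rintro ⟨F, hF⟩ f hf
    exact F.isStationaryIn_of_mem hκ (F.normal f fun α hα => hF (hf α hα))
  · intro (hdiag : DiagStationary c.ord 𝒜)
    have h𝒜' : ∀ X ∈ insert (Iio c.ord) 𝒜, X ⊆ Iio c.ord := forall_mem_insert.2 ⟨subset_rfl, h𝒜⟩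
    refine ⟨.ofDiagStationary hreg hunc (mem_insert _ 𝒜) (hdiag.insert_Iio h𝒜 hκ.pos), ?_⟩
    exact (subset_insert _ _).trans (subset_normalFilterSets h𝒜' (one_lt_of_isSuccLimit hκ))
end

section
/- Let κ be a regular uncountable cardinal and λ a cardinal. A sequence ⟨d_β : β < λ⟩ of κ-lists is a jd_{κ,λ}-sequence if and only if for every set of indices A ⊆ λ with |A| ≤ κ, the subfamily ⟨d_β : β ∈ A⟩ has the joint guessing property: for every choice of targets a_β ⊆ κ (β ∈ A) there is a proper normal uniform filter on κ containing every guessing set S(d_β, a_β) for β ∈ A. -/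
/-- `d` is a `κ`-list: a function on `κ` with `d ξ ⊆ ξ` for all `ξ < κ`. -/
def IsKappaList (κ : Ordinal) (d : Ordinal → Set Ordinal) : Prop :=
  ∀ ξ < κ, d ξ ⊆ Set.Iio ξ

/-- The guessing set `S(d,a) = {ξ < κ : d ξ = a ∩ ξ}` of a `κ`-list `d` at a target
`a ⊆ κ`. -/
def guessSet (κ : Ordinal) (d : Ordinal → Set Ordinal) (a : Set Ordinal) : Set Ordinal :=
  {ξ : Ordinal | ξ < κ ∧ d ξ = a ∩ Set.Iio ξ}

/-- The family of `κ`-lists `⟨d β : β ∈ I⟩` guesses jointly: for every choice of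
targets `a β ⊆ κ` (for `β ∈ I`) there is a single proper normal uniform filter on `κ`
containing all the guessing sets `S(d β, a β)` for `β ∈ I`. -/
def JointGuess (κ : Ordinal) (I : Set Ordinal) (d : Ordinal → Ordinal → Set Ordinal) : Prop :=
  ∀ a : Ordinal → Set Ordinal, (∀ β ∈ I, a β ⊆ Set.Iio κ) →
    ∃ F : NormalUniformFilter κ, ∀ β ∈ I, guessSet κ (d β) (a β) ∈ F.sets

open Cardinal Set

theorem JointGuess.mono {κ : Ordinal} {I J : Set Ordinal} {d : Ordinal → Ordinal → Set Ordinal}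
    (hJ : JointGuess κ J d) (hIJ : I ⊆ J) : JointGuess κ I d := by
  classical
  intro a ha
  obtain ⟨F, hF⟩ := hJ (fun β => if β ∈ I then a β else ∅) fun β _ => by
    split_ifs with hβ
    exacts [ha β hβ, empty_subset _]
  exact ⟨F, fun β hβ => by simpa [hβ] using hF β (hIJ hβ)⟩

section SmallSupport

universe u

variable {κ : Ordinal.{u}} {d : Ordinal → Ordinal → Set Ordinal} {a : Ordinal → Set Ordinal}

def IsForcedBy (κ : Ordinal) (d : Ordinal → Ordinal → Set Ordinal) (a : Ordinal → Set Ordinal)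
    (A X : Set Ordinal) : Prop :=
  ∀ F : NormalUniformFilter κ, (∀ β ∈ A, guessSet κ (d β) (a β) ∈ F.sets) → X ∈ F.sets

theorem isForcedBy_guessSet {A : Set Ordinal} {β : Ordinal} (hβ : β ∈ A) :
    IsForcedBy κ d a A (guessSet κ (d β) (a β)) :=
  fun _ hF => hF β hβ

theorem IsForcedBy.mono {A B X : Set Ordinal} (hX : IsForcedBy κ d a A X) (hAB : A ⊆ B) :
    IsForcedBy κ d a B X :=
  fun F hF => hX F fun β hβ => hF β (hAB hβ)

theorem IsForcedBy.superset {A X Y : Set Ordinal} (hX : IsForcedBy κ d a A X) (hXY : X ⊆ Y)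
    (hY : Y ⊆ Iio κ) : IsForcedBy κ d a A Y :=
  fun F hF => F.superset_mem X (hX F hF) Y hXY hY

theorem IsForcedBy.union_inter {A B X Y : Set Ordinal} (hX : IsForcedBy κ d a A X)
    (hY : IsForcedBy κ d a B Y) : IsForcedBy κ d a (A ∪ B) (X ∩ Y) :=
  fun F hF => F.inter_mem X ((hX.mono subset_union_left) F hF) Y
    ((hY.mono subset_union_right) F hF)

theorem IsForcedBy.biUnion_diag {A f : Ordinal → Set Ordinal}
    (hf : ∀ α < κ, IsForcedBy κ d a (A α) (f α)) :
    IsForcedBy κ d a (⋃ α < κ, A α) {ξ | ξ < κ ∧ ∀ α < ξ, ξ ∈ f α} :=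
  fun F hF => F.normal f fun α hα =>
    ((hf α hα).mono (subset_biUnion_of_mem (u := A) (mem_Iio.2 hα))) F hF

theorem not_isForcedBy_empty {A : Set Ordinal} (hA : JointGuess κ A d)
    (ha : ∀ β ∈ A, a β ⊆ Iio κ) : ¬ IsForcedBy κ d a A ∅ := fun hforced => by
  obtain ⟨F, hF⟩ := hA a ha
  exact F.empty_not_mem (hforced F hF)

variable {I : Set Ordinal} {μ : Cardinal.{u + 1}}

def smallSupportSets (κ : Ordinal) (I : Set Ordinal) (μ : Cardinal)
    (d : Ordinal → Ordinal → Set Ordinal) (a : Ordinal → Set Ordinal) : Set (Set Ordinal) :=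
  {X | X ⊆ Iio κ ∧ ∃ A ⊆ I, #A ≤ μ ∧ IsForcedBy κ d a A X}

theorem mem_smallSupportSets_of_isForcedBy_empty {X : Set Ordinal} (hX : X ⊆ Iio κ)
    (hforced : IsForcedBy κ d a ∅ X) : X ∈ smallSupportSets κ I μ d a :=
  ⟨hX, ∅, empty_subset _, by simp, hforced⟩

theorem inter_mem_smallSupportSets (hμ : ℵ₀ ≤ μ) {X Y : Set Ordinal}
    (hX : X ∈ smallSupportSets κ I μ d a) (hY : Y ∈ smallSupportSets κ I μ d a) :
    X ∩ Y ∈ smallSupportSets κ I μ d a := by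
  obtain ⟨hXκ, A, hAI, hA, hXA⟩ := hX
  obtain ⟨-, B, hBI, hB, hYB⟩ := hY
  exact ⟨inter_subset_left.trans hXκ, A ∪ B, union_subset hAI hBI,
    (mk_union_le A B).trans (add_le_of_le hμ hA hB), hXA.union_inter hYB⟩

theorem diag_mem_smallSupportSets (hμ : ℵ₀ ≤ μ) (hκμ : #(Iio κ) ≤ μ) {f : Ordinal → Set Ordinal}
    (hf : ∀ α < κ, f α ∈ smallSupportSets κ I μ d a) :
    {ξ | ξ < κ ∧ ∀ α < ξ, ξ ∈ f α} ∈ smallSupportSets κ I μ d a := by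
  choose! A hAI hA hforced using fun α hα => (hf α hα).2
  exact ⟨fun ξ hξ => hξ.1, ⋃ α < κ, A α, iUnion₂_subset hAI,
    mk_biUnion_le_of_le_lift (by rwa [lift_id'.{u, u + 1} μ, ← mk_Iio_ordinal]) hμ A hA,
    IsForcedBy.biUnion_diag hforced⟩

def smallSupportFilter (hμ : ℵ₀ ≤ μ) (hκμ : #(Iio κ) ≤ μ)
    (hsmall : ∀ A ⊆ I, #A ≤ μ → JointGuess κ A d) (ha : ∀ β ∈ I, a β ⊆ Iio κ) :
    NormalUniformFilter κ where
  sets := smallSupportSets κ I μ d a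
  sets_subset _ hX := hX.1
  univ_mem := mem_smallSupportSets_of_isForcedBy_empty subset_rfl fun F _ => F.univ_mem
  empty_not_mem := fun ⟨_, A, hAI, hA, hforced⟩ =>
    not_isForcedBy_empty (hsmall A hAI hA) (fun β hβ => ha β (hAI hβ)) hforced
  superset_mem := fun _ ⟨_, A, hAI, hA, hforced⟩ _ hXY hY =>
    ⟨hY, A, hAI, hA, hforced.superset hXY hY⟩
  inter_mem _ hX _ hY := inter_mem_smallSupportSets hμ hX hY
  uniform α hα := mem_smallSupportSets_of_isForcedBy_empty (fun _ hξ => hξ.2)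
    fun F _ => F.uniform α hα
  normal _ hf := diag_mem_smallSupportSets hμ hκμ hf

theorem guessSet_mem_smallSupportFilter (hμ : ℵ₀ ≤ μ) (hκμ : #(Iio κ) ≤ μ)
    (hsmall : ∀ A ⊆ I, #A ≤ μ → JointGuess κ A d) (ha : ∀ β ∈ I, a β ⊆ Iio κ)
    {β : Ordinal} (hβ : β ∈ I) :
    guessSet κ (d β) (a β) ∈ (smallSupportFilter hμ hκμ hsmall ha).sets :=
  ⟨fun _ hξ => hξ.1, {β}, singleton_subset_iff.2 hβ, by simpa using one_le_aleph0.trans hμ,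
    isForcedBy_guessSet rfl⟩

theorem jointGuess_of_forall_small (hμ : ℵ₀ ≤ μ) (hκμ : #(Iio κ) ≤ μ)
    (hsmall : ∀ A ⊆ I, #A ≤ μ → JointGuess κ A d) : JointGuess κ I d :=
  fun _ ha => ⟨smallSupportFilter hμ hκμ hsmall ha,
    fun _ hβ => guessSet_mem_smallSupportFilter hμ hκμ hsmall ha hβ⟩

end SmallSupport

theorem stmt5_general (c l : Cardinal) (hunc : Cardinal.aleph0 < c)
    (d : Ordinal → Ordinal → Set Ordinal) :
    JointGuess c.ord (Set.Iio l.ord) d ↔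
      ∀ A ⊆ Set.Iio l.ord, Cardinal.mk A ≤ Cardinal.mk (Set.Iio c.ord) →
        JointGuess c.ord A d := by
  have hinf : ℵ₀ ≤ #(Iio c.ord) := by
    rw [mk_Iio_ordinal, card_ord]
    exact aleph0_le_lift.2 hunc.le
  exact ⟨fun H A hA _ => H.mono hA, jointGuess_of_forall_small hinf le_rfl⟩

/-- For a regular uncountable cardinal `κ` and a cardinal `λ`, a sequence
`⟨d β : β < λ⟩` of `κ`-lists is a `jd_{κ,λ}`-sequence if and only if every subfamily
indexed by a set `A ⊆ λ` with `|A| ≤ κ` has the joint guessing property. -/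
theorem stmt5 (c l : Cardinal) (hreg : c.IsRegular) (hunc : Cardinal.aleph0 < c)
    (d : Ordinal → Ordinal → Set Ordinal)
    (hd : ∀ β < l.ord, IsKappaList c.ord (d β)) :
    JointGuess c.ord (Set.Iio l.ord) d ↔
      ∀ A ⊆ Set.Iio l.ord, Cardinal.mk A ≤ Cardinal.mk (Set.Iio c.ord) →
        JointGuess c.ord A d :=
  stmt5_general c l hunc d
end

section
/- Suppose that for every cardinal λ < 𝔠 and every family 𝒟 of fewer than 𝔠 dense subsets of the Cohen poset Add(ω,λ) there is a filter on Add(ω,λ) meeting every member of 𝒟. Then the same holds for every cardinal κ: for every family 𝒟 of fewer than 𝔠 dense subsets of Add(ω,κ) there is a filter on Add(ω,κ) meeting every member of 𝒟. (That is, Martin's axiom for Cohen posets is equivalent to its restriction to Cohen posets Add(ω,λ) with λ < 𝔠.) -/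
/-!
A downward Löwenheim–Skolem argument. For each `D ∈ 𝒟` choose, below every condition, an
extension lying in `D`. Closing a set of columns under these choices `ω` times yields `A ⊆ κ`
with `|A| ≤ |𝒟| + ℵ₀ < 𝔠` such that the chosen extensions of a condition supported on `A × ω`
are again supported on `A × ω`. Hence the traces of the members of `𝒟` on
`Add(ω, A) ≅ Add(ω, |A|)` are dense there; a filter meeting them all exists by hypothesis,
and its upward closure in `Add(ω, κ)` meets every member of `𝒟`.
-/

/-- The Cohen poset of finite partial functions from `X` to `2`, ordered by reverse
inclusion. A condition is (the graph of) a finite partial function, coded as a finite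
set of pairs `(x, b)` containing at most one pair for each `x`. -/
def CohenPoset (X : Type) : Type :=
  {s : Finset (X × Bool) // ∀ x b₁ b₂, (x, b₁) ∈ s → (x, b₂) ∈ s → b₁ = b₂}

instance (X : Type) : PartialOrder (CohenPoset X) where
  le p q := q.1 ⊆ p.1
  le_refl p := Finset.Subset.refl _
  le_trans p q r hpq hqr := Finset.Subset.trans hqr hpq
  le_antisymm p q h₁ h₂ := Subtype.ext (Finset.Subset.antisymm h₂ h₁)

/-- A subset `D` of a poset is dense if every condition has a lower bound in `D`. -/
def IsDenseIn {P : Type*} [LE P] (D : Set P) : Prop :=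
  ∀ p : P, ∃ q ∈ D, q ≤ p

/-- A filter on a poset: a nonempty, upward closed, downward directed set. -/
def IsPosetFilter {P : Type*} [LE P] (G : Set P) : Prop :=
  G.Nonempty ∧ (∀ p ∈ G, ∀ q, p ≤ q → q ∈ G) ∧
    ∀ p ∈ G, ∀ q ∈ G, ∃ r ∈ G, r ≤ p ∧ r ≤ q

open Cardinal Set Function

universe u

theorem IsPosetFilter.upperClosure_image {P Q : Type*} [Preorder P] [Preorder Q] {f : P → Q}
    (hf : Monotone f) {G : Set P} (hG : IsPosetFilter G) :
    IsPosetFilter (upperClosure (f '' G) : Set Q) := by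
  obtain ⟨hne, -, hdir⟩ := hG
  refine ⟨(hne.image f).mono subset_upperClosure, fun p hp q hpq => (upperClosure _).upper hpq hp,
    ?_⟩
  rintro _ ⟨_, ⟨a, ha, rfl⟩, hap⟩ _ ⟨_, ⟨b, hb, rfl⟩, hbq⟩
  obtain ⟨c, hc, hca, hcb⟩ := hdir a ha b hb
  exact ⟨f c, subset_upperClosure ⟨c, hc, rfl⟩, (hf hca).trans hap, (hf hcb).trans hbq⟩

theorem exists_mk_le_closed_set {ι α K : Type u} {μ : Cardinal.{u}} (hμ : ℵ₀ ≤ μ) (hι : #ι ≤ μ)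
    (supp : α → Set K) (hfin : ∀ a, (supp a).Finite)
    (hcard : ∀ S : Set K, #S ≤ μ → #{a | supp a ⊆ S} ≤ μ) (f : ι → α → α) :
    ∃ A : Set K, #A ≤ μ ∧ ∀ i a, supp a ⊆ A → supp (f i a) ⊆ A := by
  let step (S : Set K) : Set K := S ∪ ⋃ x : ι × {a | supp a ⊆ S}, supp (f x.1 x.2)
  let Z (n : ℕ) : Set K := step^[n] ∅
  have hZ_succ (n : ℕ) : Z (n + 1) = step (Z n) := iterate_succ_apply' step n ∅
  have hZ_mono : Monotone Z := monotone_nat_of_le_succ fun n => by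
    rw [hZ_succ]
    exact subset_union_left
  have hstep {S : Set K} (hS : #S ≤ μ) : #(step S) ≤ μ := by
    refine (mk_union_le _ _).trans ?_
    rw [← add_eq_self hμ]
    refine add_le_add hS ((mk_iUnion_le _).trans ?_)
    rw [← mul_eq_self hμ]
    refine mul_le_mul' ?_ (ciSup_le' fun x => ?_)
    · rw [mk_prod, lift_id, lift_id, ← mul_eq_self hμ]
      exact mul_le_mul' hι (hcard S hS)
    · exact (lt_aleph0_iff_set_finite.2 (hfin _)).le.trans hμ
  have hZ_mk (n : ℕ) : #(Z n) ≤ μ := by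
    induction n with
    | zero => simp [Z]
    | succ n ih => rw [hZ_succ]; exact hstep ih
  refine ⟨⋃ n, Z n, ?_, fun i a ha => ?_⟩
  · have hunion := mk_iUnion_le_lift Z
    simp only [lift_uzero, mk_nat, lift_aleph0] at hunion
    refine hunion.trans ?_
    rw [← mul_eq_self hμ]
    exact mul_le_mul' hμ (ciSup_le' hZ_mk)
  · obtain ⟨n, hn⟩ : ∃ n, supp a ⊆ Z n := by
      have := hZ_mono.directed_le.exists_mem_subset_of_finset_subset_biUnion
        (s := (hfin a).toFinset) (by simpa using ha)
      simpa using this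
    calc supp (f i a) ⊆ step (Z n) := subset_union_of_subset_right
          (subset_iUnion (fun x : ι × {a | supp a ⊆ Z n} => supp (f x.1 x.2)) (i, ⟨a, hn⟩)) _
      _ = Z (n + 1) := (hZ_succ n).symm
      _ ⊆ ⋃ n, Z n := subset_iUnion Z (n + 1)

lemma Cardinal.exists_embedding_ord_toType_range_eq {K : Type u} (A : Set K) :
    ∃ g : (#A).ord.ToType ↪ K, range g = A := by
  obtain ⟨e⟩ := Cardinal.eq.1 (mk_ord_toType #A)
  exact ⟨e.toEmbedding.trans (Embedding.subtype _), by
    rw [Embedding.coe_trans, range_comp, Equiv.coe_toEmbedding, e.range_eq_univ, image_univ,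
      Embedding.coe_subtype, Subtype.range_coe]⟩

namespace CohenPoset

variable {X Y : Type}

def dom (p : CohenPoset X) : Set X := Prod.fst '' (p.1 : Set (X × Bool))

lemma finite_dom (p : CohenPoset X) : p.dom.Finite := p.1.finite_toSet.image _

def map (f : X ↪ Y) : CohenPoset X ↪o CohenPoset Y :=
  OrderEmbedding.ofMapLEIff
    (fun p => ⟨p.1.map (f.prodMap (Embedding.refl Bool)), by
      simp only [Finset.mem_map, Embedding.coe_prodMap, Prod.exists, Prod.map_apply,
        Embedding.refl_apply, Prod.mk.injEq]
      rintro y b₁ b₂ ⟨x₁, _, hx₁, rfl, rfl⟩ ⟨x₂, _, hx₂, hx, rfl⟩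
      exact p.2 x₁ _ _ hx₁ (f.injective hx ▸ hx₂)⟩)
    (fun _ _ => Finset.map_subset_map)

lemma map_val (f : X ↪ Y) (p : CohenPoset X) :
    (map f p).1 = p.1.map (f.prodMap (Embedding.refl Bool)) := rfl

lemma mem_range_map {f : X ↪ Y} {q : CohenPoset Y} : q ∈ range (map f) ↔ q.dom ⊆ range f := by
  constructor
  · rintro ⟨p, rfl⟩
    rintro _ ⟨_, hz, rfl⟩
    obtain ⟨z, -, rfl⟩ := Finset.mem_map.1 hz
    exact ⟨z.1, rfl⟩
  · intro hq
    have hrange : (q.1 : Set (Y × Bool)) ⊆ range (f.prodMap (Embedding.refl Bool)) := by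
      intro z hz
      obtain ⟨x, hx⟩ := hq ⟨z, hz, rfl⟩
      exact ⟨(x, z.2), Prod.ext hx rfl⟩
    let p : CohenPoset X := ⟨q.1.preimage _ (f.prodMap (Embedding.refl Bool)).injective.injOn,
      fun x b₁ b₂ h₁ h₂ => by
        rw [Finset.mem_preimage] at h₁ h₂
        exact q.2 _ _ _ h₁ h₂⟩
    refine ⟨p, Subtype.ext (Finset.coe_injective ?_)⟩
    rw [map_val, Finset.coe_map, Finset.coe_preimage, image_preimage_eq_of_subset hrange]

lemma mk_le {μ : Cardinal} (hμ : ℵ₀ ≤ μ) (hX : #X ≤ μ) : #(CohenPoset X) ≤ μ := by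
  classical
  calc #(CohenPoset X) ≤ #(Finset (X × Bool)) := mk_le_of_injective Subtype.val_injective
    _ ≤ #(List (X × Bool)) := mk_le_of_surjective List.toFinset_surjective
    _ ≤ max ℵ₀ #(X × Bool) := mk_list_le_max _
    _ ≤ μ := by
      refine max_le hμ ?_
      rw [mk_prod, lift_id, lift_id, ← mul_eq_self hμ]
      exact mul_le_mul' hX ((lt_aleph0_of_finite Bool).le.trans hμ)

lemma mem_range_map_prodMap {Z K : Type} {g : Z ↪ K} {q : CohenPoset (K × ℕ)} :
    q ∈ range (map (g.prodMap (Embedding.refl ℕ))) ↔ Prod.fst '' q.dom ⊆ range g := by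
  rw [mem_range_map, Embedding.coe_prodMap, Embedding.coe_refl, range_prodMap, range_id,
    prod_univ, image_subset_iff]

lemma mk_setOf_fst_dom_subset_le {K : Type} {μ : Cardinal} (hμ : ℵ₀ ≤ μ) {S : Set K}
    (hS : #S ≤ μ) : #{q : CohenPoset (K × ℕ) | Prod.fst '' q.dom ⊆ S} ≤ μ := by
  have hsub : {q : CohenPoset (K × ℕ) | Prod.fst '' q.dom ⊆ S} ⊆
      range (map ((Embedding.subtype (· ∈ S)).prodMap (Embedding.refl ℕ))) := fun q hq =>
    mem_range_map_prodMap.2 (by simpa using hq)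
  refine (mk_le_mk_of_subset hsub).trans (mk_range_le.trans (mk_le hμ ?_))
  rw [mk_prod, lift_id, lift_id, mk_nat, ← mul_eq_self hμ]
  exact mul_le_mul' hS hμ

lemma isDenseIn_preimage_map_prodMap {Z K : Type} (g : Z ↪ K) {D : Set (CohenPoset (K × ℕ))}
    (hD : ∀ p, Prod.fst '' p.dom ⊆ range g → ∃ q ∈ D, q ≤ p ∧ Prod.fst '' q.dom ⊆ range g) :
    IsDenseIn (map (g.prodMap (Embedding.refl ℕ)) ⁻¹' D) := by
  intro p
  obtain ⟨q, hqD, hqp, hq⟩ := hD _ (mem_range_map_prodMap.1 ⟨p, rfl⟩)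
  obtain ⟨q', rfl⟩ := mem_range_map_prodMap.2 hq
  exact ⟨q', hqD, (map _).le_iff_le.1 hqp⟩

end CohenPoset

/-- Martin's axiom for Cohen posets is equivalent to its restriction to Cohen posets
`Add(ω,λ)` with `λ < 𝔠`: if for every cardinal `λ < 𝔠` and every family of fewer than
`𝔠` dense subsets of `Add(ω,λ)` (the poset of finite partial functions from `λ × ω`
to `2`) there is a filter meeting them all, then the same holds for `Add(ω,κ)` for
every cardinal `κ`. -/
theorem stmt9
    (h : ∀ lam : Cardinal, lam < Cardinal.continuum →
      ∀ 𝒟 : Set (Set (CohenPoset (lam.ord.ToType × ℕ))),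
        Cardinal.mk 𝒟 < Cardinal.continuum → (∀ D ∈ 𝒟, IsDenseIn D) →
        ∃ G : Set (CohenPoset (lam.ord.ToType × ℕ)),
          IsPosetFilter G ∧ ∀ D ∈ 𝒟, (G ∩ D).Nonempty) :
    ∀ kap : Cardinal, ∀ 𝒟 : Set (Set (CohenPoset (kap.ord.ToType × ℕ))),
      Cardinal.mk 𝒟 < Cardinal.continuum → (∀ D ∈ 𝒟, IsDenseIn D) →
      ∃ G : Set (CohenPoset (kap.ord.ToType × ℕ)),
        IsPosetFilter G ∧ ∀ D ∈ 𝒟, (G ∩ D).Nonempty := by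
  intro kap 𝒟 h𝒟 hdense
  choose ext hext_mem hext_le using fun D : 𝒟 => hdense D D.2
  have hμ : max #𝒟 ℵ₀ < 𝔠 := max_lt h𝒟 aleph0_lt_continuum
  obtain ⟨A, hA, hA_closed⟩ := exists_mk_le_closed_set (le_max_right _ _) (le_max_left _ _)
    (fun p => Prod.fst '' p.dom) (fun p => p.finite_dom.image _)
    (fun _ => CohenPoset.mk_setOf_fst_dom_subset_le (le_max_right _ _)) ext
  obtain ⟨g, hg⟩ := exists_embedding_ord_toType_range_eq A
  set F := CohenPoset.map (g.prodMap (Embedding.refl ℕ))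
  obtain ⟨G, hG, hG_meets⟩ := h #A (hA.trans_lt hμ) ((F ⁻¹' ·) '' 𝒟)
    (mk_image_le.trans_lt h𝒟) (forall_mem_image.2 fun D hD =>
      CohenPoset.isDenseIn_preimage_map_prodMap g fun p hp =>
        ⟨ext ⟨D, hD⟩ p, hext_mem ⟨D, hD⟩ p, hext_le _ p, by
          rw [hg] at hp ⊢
          exact hA_closed _ p hp⟩)
  refine ⟨upperClosure (F '' G), hG.upperClosure_image F.monotone, fun D hD => ?_⟩
  obtain ⟨p, hpG, hpD⟩ := hG_meets _ (mem_image_of_mem _ hD)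
  exact ⟨F p, subset_upperClosure (mem_image_of_mem F hpG), hpD⟩
end

section
/- Let Q be a Knaster poset. Then the finite-mixture termspace preorder Termfin(C,Q) over Cohen forcing C = 2^{<ω} is also Knaster. -/
/-- A (pre)ordered set is Knaster if every uncountable subset has an uncountable
subset of pairwise compatible elements. -/
def IsKnaster (P : Type*) [LE P] : Prop :=
  ∀ T : Set P, ¬T.Countable →
    ∃ T' ⊆ T, ¬T'.Countable ∧ ∀ p ∈ T', ∀ q ∈ T', ∃ r, r ≤ p ∧ r ≤ q

/-- A finite mixture over Cohen forcing `C = 2^{<ω}` into `Q`: a finite maximal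
antichain `A` of finite binary sequences (pairwise non-comparable, and every branch
`ω → 2` has an initial segment in `A`) together with a function `f : A → Q`. -/
structure FinMixture (Q : Type*) where
  A : Finset (List Bool)
  antichain : ∀ s ∈ A, ∀ t ∈ A, s ≠ t → ¬(s <+: t ∨ t <+: s)
  maximal : ∀ b : ℕ → Bool, ∃ s ∈ A, ∀ i : Fin s.length, s.get i = b i
  f : {s : List Bool // s ∈ A} → Q

/-- The finite-mixture termspace preorder `Termfin(C,Q)`: `(A',f') ≤ (A,f)` iff
`f' s' ≤ f s` whenever `s' ∈ A'` and `s ∈ A` are comparable. -/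
instance (Q : Type*) [LE Q] : LE (FinMixture Q) :=
  ⟨fun p q => ∀ (s' : {s : List Bool // s ∈ p.A}) (s : {s : List Bool // s ∈ q.A}),
    ((s' : List Bool) <+: s ∨ (s : List Bool) <+: s') → p.f s' ≤ q.f s⟩

/-! A single antichain `A` carries uncountably many of the given mixtures, since there are only
countably many finite sets of binary sequences. Mixtures over the same `A` are just functions
`A → Q`, and the Knaster property passes to finite powers by thinning out one coordinate at a
time. Two mixtures over the same antichain with pointwise compatible values are compatible, the
pointwise lower bounds forming a common extension: elements of an antichain are comparable only
with themselves. -/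

lemma Set.exists_not_countable_inter_preimage_singleton {α β : Type*} {S : Set α} {f : α → β}
    (hS : ¬S.Countable) (hf : (f '' S).Countable) : ∃ b, ¬(S ∩ f ⁻¹' {b}).Countable := by
  by_contra! h
  refine hS ((hf.biUnion fun b _ => h b).mono fun x hx => ?_)
  exact Set.mem_biUnion (Set.mem_image_of_mem f hx) ⟨hx, rfl⟩

namespace IsKnaster

variable {Q α : Type*} [Preorder Q]

lemma exists_not_countable_compatible_comp (hQ : IsKnaster Q) (g : α → Q) {S : Set α}
    (hS : ¬S.Countable) :
    ∃ S' ⊆ S, ¬S'.Countable ∧ ∀ p ∈ S', ∀ q ∈ S', ∃ r, r ≤ g p ∧ r ≤ g q := by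
  by_cases himg : (g '' S).Countable
  · obtain ⟨b, hb⟩ := Set.exists_not_countable_inter_preimage_singleton hS himg
    refine ⟨S ∩ g ⁻¹' {b}, Set.inter_subset_left, hb, fun p hp q hq => ⟨b, ?_, ?_⟩⟩
    · exact hp.2.ge
    · exact hq.2.ge
  · obtain ⟨U, hUS, hU, hUcompat⟩ := hQ _ himg
    refine ⟨S ∩ g ⁻¹' U, Set.inter_subset_left, fun hcount => hU ?_,
      fun p hp q hq => hUcompat _ hp.2 _ hq.2⟩
    refine (hcount.image g).mono fun u hu => ?_
    obtain ⟨x, hx, rfl⟩ := hUS hu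
    exact ⟨x, ⟨hx, hu⟩, rfl⟩

lemma exists_not_countable_compatible_finset (hQ : IsKnaster Q) {ι : Type*} (J : Finset ι)
    (g : ι → α → Q) {S : Set α} (hS : ¬S.Countable) :
    ∃ S' ⊆ S, ¬S'.Countable ∧ ∀ p ∈ S', ∀ q ∈ S', ∀ i ∈ J, ∃ r, r ≤ g i p ∧ r ≤ g i q := by
  classical
  induction J using Finset.induction_on with
  | empty => exact ⟨S, subset_rfl, hS, by simp⟩
  | insert i J _ ih =>
    obtain ⟨S₁, hS₁S, hS₁, hJ⟩ := ih
    obtain ⟨S₂, hS₂S₁, hS₂, hi⟩ := hQ.exists_not_countable_compatible_comp (g i) hS₁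
    refine ⟨S₂, hS₂S₁.trans hS₁S, hS₂, fun p hp q hq j hj => ?_⟩
    rcases Finset.mem_insert.mp hj with rfl | hj
    · exact hi p hp q hq
    · exact hJ p (hS₂S₁ hp) q (hS₂S₁ hq) j hj

end IsKnaster

namespace FinMixture

variable {Q : Type*}

lemma nonempty (p : FinMixture Q) : Nonempty Q :=
  let ⟨s, hs, _⟩ := p.maximal fun _ => false
  ⟨p.f ⟨s, hs⟩⟩

/-- Junk unless `s ∈ p.A`. -/
noncomputable def value [Nonempty Q] (p : FinMixture Q) (s : List Bool) : Q :=
  if h : s ∈ p.A then p.f ⟨s, h⟩ else Classical.arbitrary Q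

lemma value_of_mem [Nonempty Q] (p : FinMixture Q) {s : List Bool} (hs : s ∈ p.A) :
    p.value s = p.f ⟨s, hs⟩ :=
  dif_pos hs

lemma eq_of_mem_of_comparable (p : FinMixture Q) {s t : List Bool} (hs : s ∈ p.A)
    (ht : t ∈ p.A) (hst : s <+: t ∨ t <+: s) : s = t :=
  not_not.mp fun hne => p.antichain s hs t ht hne hst

lemma le_of_A_eq [LE Q] [Nonempty Q] {m p : FinMixture Q} (hA : m.A = p.A)
    (h : ∀ s (hs : s ∈ m.A), m.f ⟨s, hs⟩ ≤ p.value s) : m ≤ p := by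
  rintro ⟨s', hs'⟩ ⟨s, hs⟩ hcomp
  obtain rfl := p.eq_of_mem_of_comparable (hA ▸ hs') hs hcomp
  exact (h s' hs').trans_eq (p.value_of_mem hs)

lemma exists_le_le_of_A_eq [LE Q] [Nonempty Q] {p q : FinMixture Q} (hA : p.A = q.A)
    (h : ∀ s ∈ p.A, ∃ r, r ≤ p.value s ∧ r ≤ q.value s) : ∃ r, r ≤ p ∧ r ≤ q := by
  choose r hrp hrq using h
  exact ⟨⟨p.A, p.antichain, p.maximal, fun s => r s s.2⟩,
    le_of_A_eq rfl hrp, le_of_A_eq hA hrq⟩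

end FinMixture

/-- If `Q` is a Knaster poset then the finite-mixture termspace preorder
`Termfin(C,Q)` over Cohen forcing is Knaster as well. -/
theorem stmt11 (Q : Type*) [PartialOrder Q] (hQ : IsKnaster Q) :
    IsKnaster (FinMixture Q) := by
  intro T hT
  obtain ⟨A, hA⟩ := Set.exists_not_countable_inter_preimage_singleton (f := FinMixture.A) hT
    (Set.to_countable _)
  obtain ⟨p₀, -⟩ := Set.Infinite.nonempty fun hfin => hA hfin.countable
  have := p₀.nonempty
  obtain ⟨S, hST, hS, hcompat⟩ :=
    hQ.exists_not_countable_compatible_finset A (fun s p => p.value s) hA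
  refine ⟨S, fun p hp => (hST hp).1, hS, fun p hp q hq => ?_⟩
  have hpA : p.A = A := (hST hp).2
  refine FinMixture.exists_le_le_of_A_eq (hpA.trans (hST hq).2.symm) ?_
  rw [hpA]
  exact hcompat p hp q hq
end
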